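/- For every real q>1, every n≥1 and every x∈[0,∞): M_{n,q}(t;x)=x and M_{n,q}(t^2;x)=x^2 + x/[n]_q. -/

import Mathlib

open scoped BigOperators

/-- The `q`-integer `[k]_q = (q^k - 1)/(q - 1)`. -/
noncomputable def qNat (q : ℝ) (k : ℕ) : ℝ := (q ^ k - 1) / (q - 1)

/-- The `q`-factorial `[k]_q! = [1]_q [2]_q ⋯ [k]_q`, with `[0]_q! = 1`. -/
noncomputable def qFactorial (q : ℝ) : ℕ → ℝ
  | 0 => 1
  | k + 1 => qFactorial q k * qNat q (k + 1)

/-- The `q`-exponential function `e_q(z) = ∑_{k=0}^∞ z^k/[k]_q!`. -/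
noncomputable def qExp (q z : ℝ) : ℝ := ∑' k : ℕ, z ^ k / qFactorial q k

/-- The `q`-Szász basis function
`s_{n,k}(q;x) = q^{-k(k-1)/2} ([n]_q^k x^k/[k]_q!) e_q(-[n]_q q^{-k} x)`. -/
noncomputable def qSzaszBasis (q : ℝ) (n k : ℕ) (x : ℝ) : ℝ :=
  (q ^ (k * (k - 1) / 2))⁻¹ * (qNat q n ^ k * x ^ k / qFactorial q k) *
    qExp q (-(qNat q n) * q ^ (-(k : ℤ)) * x)

/-- The `q`-Szász operator `M_{n,q}(f;x) = ∑_{k=0}^∞ f([k]_q/[n]_q) s_{n,k}(q;x)`. -/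
noncomputable def qSzasz (q : ℝ) (n : ℕ) (f : ℝ → ℝ) (x : ℝ) : ℝ :=
  ∑' k : ℕ, f (qNat q k / qNat q n) * qSzaszBasis q n k x

/-- The weight `w_0(x) = 1`, `w_p(x) = (1 + x^p)⁻¹` for `p ≥ 1`. -/
noncomputable def weight (p : ℕ) (x : ℝ) : ℝ := if p = 0 then 1 else (1 + x ^ p)⁻¹

/-- The weighted sup-norm `‖f‖_p = sup_{x ≥ 0} w_p(x)|f(x)|`. -/
noncomputable def wnorm (p : ℕ) (f : ℝ → ℝ) : ℝ :=
  ⨆ x : Set.Ici (0 : ℝ), weight p x.1 * |f x.1|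

/-- Membership in the space `C_p`: `f` is continuous on `[0,∞)` and `w_p f` is
uniformly continuous and bounded on `[0,∞)`. -/
def MemCp (p : ℕ) (f : ℝ → ℝ) : Prop :=
  ContinuousOn f (Set.Ici 0) ∧
  UniformContinuousOn (fun x => weight p x * f x) (Set.Ici 0) ∧
  ∃ M : ℝ, ∀ x ∈ Set.Ici (0 : ℝ), |weight p x * f x| ≤ M

/-- The second difference `Δ_h² f(x) = f(x+2h) - 2f(x+h) + f(x)`. -/
noncomputable def delta2 (f : ℝ → ℝ) (h x : ℝ) : ℝ := f (x + 2 * h) - 2 * f (x + h) + f x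

/-- The second modulus of smoothness `ω_p²(f;δ) = sup_{0<h≤δ} ‖Δ_h² f‖_p`. -/
noncomputable def omega2 (p : ℕ) (f : ℝ → ℝ) (δ : ℝ) : ℝ :=
  ⨆ h : {h : ℝ // 0 < h ∧ h ≤ δ}, wnorm p (fun x => delta2 f h.1 x)

/-- The (first) modulus of continuity on `[0,∞)`:
`ω(g;δ) = sup {|g(s)-g(t)| : s,t ≥ 0, |s-t| ≤ δ}`. -/
noncomputable def omega1 (g : ℝ → ℝ) (δ : ℝ) : ℝ :=
  sSup {d : ℝ | ∃ s t : ℝ, 0 ≤ s ∧ 0 ≤ t ∧ |s - t| ≤ δ ∧ d = |g s - g t|}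

/-- The `q`-derivative `(D_q g)(x) = (g(qx) - g(x))/((q-1)x)`. -/
noncomputable def qDeriv (q : ℝ) (g : ℝ → ℝ) (x : ℝ) : ℝ := (g (q * x) - g x) / ((q - 1) * x)

/-- The `q`-Stirling-type numbers: `S_q(0,0)=1`, `S_q(m,0)=0` for `m>0`,
`S_q(m,j)=0` for `m<j`, and `S_q(m+1,j)=[j]_q S_q(m,j) + S_q(m,j-1)`. -/
noncomputable def qStirling (q : ℝ) : ℕ → ℕ → ℝ
  | 0, 0 => 1
  | 0, _ + 1 => 0
  | _ + 1, 0 => 0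
  | m + 1, j + 1 => qNat q (j + 1) * qStirling q m (j + 1) + qStirling q m j

/-! Write `y = [n]_q x`, so that `s_{n,k}(q;x) = T_y(k) := q^{-k(k-1)/2} y^k/[k]_q! e_q(-y q^{-k})`.
Expanding `e_q` turns `∑_k T_y(k)` into a double series whose antidiagonal sum of total degree
`m ≥ 1` is a multiple of Rothe's sum `R_m(1)`, where
`R_m(t) = ∑_j (-1)^j q^{j(j-1)/2} [m choose j]_q t^j`; the `q`-Pascal rule gives
`R_{m+1}(t) = (1 - t) R_m(qt)`, so `R_m(1) = 0` and `∑_k T_y(k) = 1`. The shift identity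
`[k+1]_q T_y(k+1) = y T_{y/q}(k)` and `[k+1]_q = q [k]_q + 1` then give
`∑_k [k]_q T_y(k) = y` and `∑_k [k]_q² T_y(k) = y² + y`; divide by `[n]_q` and `[n]_q²`. -/

open Finset Nat

section QNumbers

variable {q : ℝ}

lemma qNat_zero : qNat q 0 = 0 := by
  simp [qNat]

lemma qNat_eq_sum_pow (hq : q ≠ 1) (k : ℕ) : qNat q k = ∑ i ∈ range k, q ^ i :=
  (geom_sum_eq hq k).symm

lemma qNat_add (hq : q ≠ 1) (i j : ℕ) : qNat q (i + j) = qNat q i + q ^ i * qNat q j := by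
  have : q - 1 ≠ 0 := sub_ne_zero.2 hq
  simp only [qNat]
  field_simp
  ring

lemma qNat_succ (hq : q ≠ 1) (k : ℕ) : qNat q (k + 1) = q * qNat q k + 1 := by
  have : q - 1 ≠ 0 := sub_ne_zero.2 hq
  simp only [qNat]
  field_simp
  ring

lemma natCast_le_qNat (hq : 1 < q) (k : ℕ) : (k : ℝ) ≤ qNat q k := by
  rw [qNat_eq_sum_pow hq.ne']
  simpa using Finset.sum_le_sum fun i (_ : i ∈ range k) => one_le_pow₀ hq.le

lemma qNat_pos (hq : 1 < q) {k : ℕ} (hk : 0 < k) : 0 < qNat q k :=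
  (Nat.cast_pos.2 hk).trans_le (natCast_le_qNat hq k)

lemma factorial_le_qFactorial (hq : 1 < q) (k : ℕ) : (k ! : ℝ) ≤ qFactorial q k := by
  induction k with
  | zero => simp [qFactorial]
  | succ k ih =>
    rw [factorial_succ, Nat.cast_mul, mul_comm, qFactorial]
    exact mul_le_mul ih (natCast_le_qNat hq (k + 1)) (by positivity)
      ((Nat.cast_pos.2 k.factorial_pos).le.trans ih)

lemma qFactorial_pos (hq : 1 < q) (k : ℕ) : 0 < qFactorial q k :=
  (Nat.cast_pos.2 k.factorial_pos).trans_le (factorial_le_qFactorial hq k)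

lemma summable_pow_div_qFactorial (hq : 1 < q) (z : ℝ) :
    Summable fun k => z ^ k / qFactorial q k := by
  refine (Real.summable_pow_div_factorial |z|).of_norm_bounded fun k => ?_
  rw [norm_div, norm_pow, Real.norm_eq_abs, Real.norm_eq_abs, abs_of_pos (qFactorial_pos hq k)]
  gcongr
  exact factorial_le_qFactorial hq k

end QNumbers

section QBinomial

variable {q : ℝ}

noncomputable def qChoose (q : ℝ) (m k : ℕ) : ℝ :=
  if k ≤ m then qFactorial q m / (qFactorial q k * qFactorial q (m - k)) else 0

lemma qChoose_zero_right (hq : 1 < q) (m : ℕ) : qChoose q m 0 = 1 := by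
  simp [qChoose, qFactorial, (qFactorial_pos hq m).ne']

lemma qChoose_self (hq : 1 < q) (m : ℕ) : qChoose q m m = 1 := by
  simp [qChoose, qFactorial, (qFactorial_pos hq m).ne']

lemma qChoose_of_lt {m k : ℕ} (h : m < k) : qChoose q m k = 0 :=
  if_neg h.not_ge

lemma qChoose_succ_succ (hq : 1 < q) (m k : ℕ) :
    qChoose q (m + 1) (k + 1) = qChoose q m k + q ^ (k + 1) * qChoose q m (k + 1) := by
  rcases lt_trichotomy m k with h | rfl | h
  · simp [qChoose_of_lt h, qChoose_of_lt (Nat.succ_lt_succ h),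
      qChoose_of_lt (h.trans k.lt_succ_self)]
  · simp [qChoose_self hq, qChoose_of_lt m.lt_succ_self]
  obtain ⟨r, rfl⟩ := Nat.exists_eq_add_of_lt h
  have hsplit : qNat q (k + r + 1 + 1) = qNat q (k + 1) + q ^ (k + 1) * qNat q (r + 1) := by
    rw [← qNat_add hq.ne', show k + 1 + (r + 1) = k + r + 1 + 1 by ring]
  simp only [qChoose, if_pos (by omega : k ≤ k + r + 1), if_pos (by omega : k + 1 ≤ k + r + 1),
    if_pos (by omega : k + 1 ≤ k + r + 1 + 1), show k + r + 1 + 1 - (k + 1) = r + 1 by omega,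
    show k + r + 1 - k = r + 1 by omega, show k + r + 1 - (k + 1) = r by omega, qFactorial, hsplit]
  have := qFactorial_pos hq k
  have := qFactorial_pos hq r
  have := qNat_pos hq k.succ_pos
  have := qNat_pos hq r.succ_pos
  field_simp

/-- Equals `∏_{i < m} (1 - q^i t)` by the `q`-binomial theorem. -/
noncomputable def rotheSum (q : ℝ) (m : ℕ) (t : ℝ) : ℝ :=
  ∑ j ∈ range (m + 1), (-1) ^ j * q ^ j.choose 2 * qChoose q m j * t ^ j

lemma rotheSum_succ (hq : 1 < q) (m : ℕ) (t : ℝ) :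
    rotheSum q (m + 1) t = (1 - t) * rotheSum q m (q * t) := by
  simp only [rotheSum]
  set a : ℕ → ℝ := fun j => (-1) ^ j * q ^ j.choose 2 * qChoose q m j * (q * t) ^ j
  have hterm : ∀ j,
      (-1) ^ (j + 1) * q ^ (j + 1).choose 2 * qChoose q (m + 1) (j + 1) * t ^ (j + 1) =
        -t * a j + a (j + 1) := by
    intro j
    simp only [a, qChoose_succ_succ hq, Nat.choose_succ_succ', Nat.choose_one_right, pow_add]
    ring
  have hfirst : (-1) ^ 0 * q ^ (0 : ℕ).choose 2 * qChoose q (m + 1) 0 * t ^ 0 = a 0 := by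
    simp [a, qChoose_zero_right hq]
  have hlast : a (m + 1) = 0 := by simp [a, qChoose_of_lt m.lt_succ_self]
  rw [sum_range_succ', sum_congr rfl fun j _ => hterm j, sum_add_distrib, ← mul_sum, hfirst,
    add_assoc, ← sum_range_succ' a, sum_range_succ a (m + 1), hlast, add_zero]
  ring

lemma rotheSum_succ_one (hq : 1 < q) (m : ℕ) : rotheSum q (m + 1) 1 = 0 := by
  simp [rotheSum_succ hq]

end QBinomial

theorem Nat.add_choose_two (k j : ℕ) :
    (k + j).choose 2 = k.choose 2 + j.choose 2 + k * j := by
  induction j with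
  | zero => simp
  | succ j ih =>
    rw [← add_assoc, Nat.choose_succ_succ', ih, Nat.choose_succ_succ' j]
    simp only [Nat.choose_one_right]
    ring

lemma HasSum.sum_antidiagonal {α A : Type*} [AddCommMonoid α] [TopologicalSpace α]
    [ContinuousAdd α] [RegularSpace α] [AddCommMonoid A] [HasAntidiagonal A]
    {f : A × A → α} {a : α} (h : HasSum f a) :
    HasSum (fun n => ∑ p ∈ antidiagonal n, f p) a :=
  (HasAntidiagonal.sigmaAntidiagonalEquivProd.hasSum_iff.2 h).sigma
    fun n => (antidiagonal n).hasSum f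

section PartitionOfUnity

variable {q : ℝ}

noncomputable def qSzaszTerm (q y : ℝ) (k : ℕ) : ℝ :=
  y ^ k / (q ^ k.choose 2 * qFactorial q k) * qExp q (-y / q ^ k)

lemma qSzaszBasis_eq_qSzaszTerm (q : ℝ) (n k : ℕ) (x : ℝ) :
    qSzaszBasis q n k x = qSzaszTerm q (qNat q n * x) k := by
  rw [qSzaszBasis, qSzaszTerm, ← Nat.choose_two_right, zpow_neg, zpow_natCast, mul_pow]
  ring_nf

noncomputable def qSzaszDoubleTerm (q y : ℝ) (p : ℕ × ℕ) : ℝ :=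
  y ^ p.1 / (q ^ p.1.choose 2 * qFactorial q p.1) * ((-y / q ^ p.1) ^ p.2 / qFactorial q p.2)

lemma hasSum_qSzaszDoubleTerm_fiber (hq : 1 < q) (y : ℝ) (k : ℕ) :
    HasSum (fun j => qSzaszDoubleTerm q y (k, j)) (qSzaszTerm q y k) :=
  (summable_pow_div_qFactorial hq _).hasSum.mul_left _

lemma summable_qSzaszDoubleTerm (hq : 1 < q) (y : ℝ) : Summable (qSzaszDoubleTerm q y) := by
  have hpos := qFactorial_pos hq
  have hs := summable_pow_div_qFactorial hq |y|
  have hnonneg k : 0 ≤ |y| ^ k / qFactorial q k := div_nonneg (by positivity) (hpos k).le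
  refine (hs.mul_of_nonneg hs hnonneg hnonneg).of_norm_bounded ?_
  rintro ⟨k, j⟩
  have := hpos k
  have := hpos j
  have h1 : 1 ≤ q ^ k := one_le_pow₀ hq.le
  have h2 : 1 ≤ q ^ k.choose 2 := one_le_pow₀ hq.le
  have hk : |y| ^ k / (q ^ k.choose 2 * qFactorial q k) ≤ |y| ^ k / qFactorial q k := by
    gcongr
    exact le_mul_of_one_le_left (hpos k).le h2
  have hj : (|y| / q ^ k) ^ j / qFactorial q j ≤ |y| ^ j / qFactorial q j := by
    gcongr
    exact div_le_self (abs_nonneg y) h1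
  simp only [qSzaszDoubleTerm, norm_mul, norm_div, norm_pow, norm_neg, Real.norm_eq_abs,
    abs_of_pos (hpos _), abs_of_pos (by linarith : 0 < q)]
  exact mul_le_mul hk hj (by positivity) (by positivity)

lemma qSzaszDoubleTerm_eq (hq : 1 < q) (y : ℝ) {k j m : ℕ} (hm : k + j = m) :
    qSzaszDoubleTerm q y (k, j) = y ^ m / (q ^ m.choose 2 * qFactorial q m) *
      ((-1) ^ j * q ^ j.choose 2 * qChoose q m j) := by
  subst hm
  rw [qSzaszDoubleTerm, qChoose, if_pos le_add_self, Nat.add_sub_cancel, add_choose_two,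
    pow_add, pow_add, pow_mul, neg_div, neg_pow, div_pow]
  have := qFactorial_pos hq k
  have := qFactorial_pos hq j
  have := qFactorial_pos hq (k + j)
  have : 0 < q := by linarith
  field_simp
  ring

lemma sum_antidiagonal_qSzaszDoubleTerm (hq : 1 < q) (y : ℝ) (m : ℕ) :
    ∑ p ∈ antidiagonal m, qSzaszDoubleTerm q y p = if m = 0 then 1 else 0 := by
  rcases m with _ | m
  · simp [qSzaszDoubleTerm, qFactorial]
  set c := y ^ (m + 1) / (q ^ (m + 1).choose 2 * qFactorial q (m + 1))
  calc ∑ p ∈ antidiagonal (m + 1), qSzaszDoubleTerm q y p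
      = ∑ p ∈ antidiagonal (m + 1),
          c * ((-1) ^ p.2 * q ^ p.2.choose 2 * qChoose q (m + 1) p.2) :=
        sum_congr rfl fun p hp => qSzaszDoubleTerm_eq hq y (mem_antidiagonal.1 hp)
    _ = c * rotheSum q (m + 1) 1 := by
        rw [← mul_sum, rotheSum, ← Nat.sum_antidiagonal_swap,
          Nat.sum_antidiagonal_eq_sum_range_succ_mk]
        simp
    _ = 0 := by rw [rotheSum_succ_one hq, mul_zero]

theorem hasSum_qSzaszTerm (hq : 1 < q) (y : ℝ) : HasSum (qSzaszTerm q y) 1 := by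
  have hF := (summable_qSzaszDoubleTerm hq y).hasSum
  have hdiag := hF.sum_antidiagonal
  simp only [sum_antidiagonal_qSzaszDoubleTerm hq] at hdiag
  rw [(hasSum_ite_eq 0 (1 : ℝ)).unique hdiag]
  exact hF.prod_fiberwise (hasSum_qSzaszDoubleTerm_fiber hq y)

end PartitionOfUnity

section Moments

variable {q : ℝ}

lemma qNat_succ_mul_qSzaszTerm_succ (hq : 1 < q) (y : ℝ) (k : ℕ) :
    qNat q (k + 1) * qSzaszTerm q y (k + 1) = y * qSzaszTerm q (y / q) k := by
  have := qFactorial_pos hq k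
  have := qNat_pos hq k.succ_pos
  have hq0 : q ≠ 0 := by positivity
  have harg : -y / q ^ (k + 1) = -(y / q) / q ^ k := by
    field_simp
    ring
  rw [qSzaszTerm, qSzaszTerm, harg, qFactorial, Nat.choose_succ_succ', Nat.choose_one_right,
    pow_add, div_pow]
  generalize qExp q _ = e
  field_simp
  ring

lemma hasSum_qNat_mul_qSzaszTerm (hq : 1 < q) (y : ℝ) :
    HasSum (fun k => qNat q k * qSzaszTerm q y k) y := by
  rw [← hasSum_nat_add_iff' 1]
  simpa [qNat_zero, qNat_succ_mul_qSzaszTerm_succ hq] using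
    (hasSum_qSzaszTerm hq (y / q)).mul_left y

lemma hasSum_qNat_sq_mul_qSzaszTerm (hq : 1 < q) (y : ℝ) :
    HasSum (fun k => qNat q k ^ 2 * qSzaszTerm q y k) (y ^ 2 + y) := by
  have hterm : ∀ k, qNat q (k + 1) ^ 2 * qSzaszTerm q y (k + 1) =
      y * (q * (qNat q k * qSzaszTerm q (y / q) k) + qSzaszTerm q (y / q) k) := by
    intro k
    rw [pow_two, mul_assoc, qNat_succ_mul_qSzaszTerm_succ hq, qNat_succ hq.ne']
    ring
  have hsum :
      y ^ 2 + y - ∑ i ∈ range 1, qNat q i ^ 2 * qSzaszTerm q y i = y * (q * (y / q) + 1) := by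
    have : q ≠ 0 := by positivity
    simp only [sum_range_one, qNat_zero]
    field_simp
    ring
  rw [← hasSum_nat_add_iff' 1, hsum]
  simpa only [hterm] using (((hasSum_qNat_mul_qSzaszTerm hq (y / q)).mul_left q).add
    (hasSum_qSzaszTerm hq (y / q))).mul_left y

end Moments

theorem qSzasz_moments_one_two_general (q : ℝ) (hq : 1 < q) (n : ℕ) (hn : 1 ≤ n)
    (x : ℝ) :
    qSzasz q n (fun t => t) x = x ∧
      qSzasz q n (fun t => t ^ 2) x = x ^ 2 + x / qNat q n := by
  have ha : qNat q n ≠ 0 := (qNat_pos hq hn).ne'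
  simp only [qSzasz, qSzaszBasis_eq_qSzaszTerm]
  constructor
  · convert ((hasSum_qNat_mul_qSzaszTerm hq (qNat q n * x)).div_const (qNat q n)).tsum_eq
      using 1
    · exact tsum_congr fun k => by ring
    · field_simp
  · convert ((hasSum_qNat_sq_mul_qSzaszTerm hq (qNat q n * x)).div_const (qNat q n ^ 2)).tsum_eq
      using 1
    · exact tsum_congr fun k => by ring
    · field_simp

/-- `M_{n,q}(t;x) = x` and `M_{n,q}(t²;x) = x² + x/[n]_q`. -/
theorem qSzasz_moments_one_two (q : ℝ) (hq : 1 < q) (n : ℕ) (hn : 1 ≤ n)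
    (x : ℝ) (hx : 0 ≤ x) :
    qSzasz q n (fun t => t) x = x ∧
      qSzasz q n (fun t => t ^ 2) x = x ^ 2 + x / qNat q n :=
  qSzasz_moments_one_two_general q hq n hn x
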